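/- Let W be a (λ_S+1) class with s ∈ S ∩ W, and let x, y, x', y' ∈ W with w(x,y) ≥ 1 and w(x',y') ≥ 1. Let C1, C2 be (λ_S+1) cuts with s, x ∈ C1, s, x' ∈ C2, and y, y' ∉ C1 ∪ C2. If some Steiner vertex t satisfies t ∉ C1 ∪ C2, then C1 ∪ C2 is a (λ_S+1) cut, i.e., c(C1 ∪ C2) = λ_S + 1, and both edges (x,y) and (x',y') contribute to it (x, x' ∈ C1 ∪ C2 and y, y' ∉ C1 ∪ C2). -/
import Mathlib


open Finset

namespace Paper

variable {α : Type*} [Fintype α] [DecidableEq α]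

/-- Capacity of a cut `A` in an undirected multigraph with edge multiplicities `w`. -/
def cutCap (w : α → α → ℕ) (A : Finset α) : ℕ := ∑ u ∈ A, ∑ v ∈ Aᶜ, w u v

/-- `C` is a Steiner cut for the Steiner set `S`. -/
def IsSteinerCut (S C : Finset α) : Prop := (C ∩ S).Nonempty ∧ (S \ C).Nonempty

/-- `C` is an `S`-mincut: a Steiner cut of capacity `lam = λ_S`. -/
def IsSMincut (w : α → α → ℕ) (S : Finset α) (lam : ℕ) (C : Finset α) : Prop :=
  IsSteinerCut S C ∧ cutCap w C = lam

/-- `C` is a `(λ_S+1)` cut: a Steiner cut of capacity `lam + 1`. -/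
def IsPlusOneCut (w : α → α → ℕ) (S : Finset α) (lam : ℕ) (C : Finset α) : Prop :=
  IsSteinerCut S C ∧ cutCap w C = lam + 1

/-- A cut `C` separates `u` and `v`: exactly one of them lies in `C`. -/
def Separates (C : Finset α) (u v : α) : Prop := (u ∈ C ∧ v ∉ C) ∨ (v ∈ C ∧ u ∉ C)

/-- `W` is a `(λ_S+1)` class: an equivalence class of the relation relating `u,v`
iff no `S`-mincut separates them. -/
def IsClass (w : α → α → ℕ) (S : Finset α) (lam : ℕ) (W : Finset α) : Prop :=
  ∃ u0 : α, ∀ v : α, v ∈ W ↔ ∀ C : Finset α, IsSMincut w S lam C → ¬ Separates C u0 v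

/-- `C` is a nearest `(λ_S+1)` cut of `u` containing the Steiner vertex `s`. -/
def IsNearestPlusOneCut (w : α → α → ℕ) (S : Finset α) (lam : ℕ) (s u : α)
    (C : Finset α) : Prop :=
  IsPlusOneCut w S lam C ∧ s ∈ C ∧ u ∈ C ∧
    ∀ C' : Finset α, IsPlusOneCut w S lam C' → s ∈ C' → u ∈ C' → ¬ C' ⊂ C

/-- A cut `C` subdivides a set `X`. -/
def Subdivides (C X : Finset α) : Prop := (X ∩ C).Nonempty ∧ (X \ C).Nonempty

lemma cutCap_eq (w : α → α → ℕ) (A : Finset α) :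
    cutCap w A = ∑ u : α, ∑ v : α, if u ∈ A ∧ v ∉ A then w u v else 0 := by
  symm
  calc ∑ u : α, ∑ v : α, (if u ∈ A ∧ v ∉ A then w u v else 0)
      = ∑ u : α, (if u ∈ A then ∑ v : α, (if v ∈ Aᶜ then w u v else 0) else 0) := by
        apply Finset.sum_congr rfl; intro u _
        by_cases h : u ∈ A <;> simp [h]
    _ = ∑ u ∈ Finset.univ ∩ A, ∑ v ∈ Finset.univ ∩ Aᶜ, w u v := by
        rw [Finset.sum_ite_mem]
        apply Finset.sum_congr rfl; intro u _
        rw [Finset.sum_ite_mem]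
    _ = cutCap w A := by rw [Finset.univ_inter, Finset.univ_inter]; rfl

lemma cutCap_submodular (w : α → α → ℕ) (A B : Finset α) :
    cutCap w (A ∪ B) + cutCap w (A ∩ B) ≤ cutCap w A + cutCap w B := by
  simp only [cutCap_eq]
  rw [← Finset.sum_add_distrib, ← Finset.sum_add_distrib]
  apply Finset.sum_le_sum; intro u _
  rw [← Finset.sum_add_distrib, ← Finset.sum_add_distrib]
  apply Finset.sum_le_sum; intro v _
  by_cases hua : u ∈ A <;> by_cases hub : u ∈ B <;>
    by_cases hva : v ∈ A <;> by_cases hvb : v ∈ B <;>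
    simp [hua, hub, hva, hvb, Finset.mem_union, Finset.mem_inter]

/-- If a Steiner vertex lies outside the union of the two cuts, then the union is a
(λ_S+1) cut to which both failed edges contribute. -/
theorem union_is_plusOneCut_of_steiner_outside
    (w : α → α → ℕ) (hsym : ∀ u v, w u v = w v u) (hdiag : ∀ u, w u u = 0)
    (S : Finset α) (hScard : 2 ≤ S.card) (lam : ℕ)
    (hlam_ex : ∃ C : Finset α, IsSteinerCut S C ∧ cutCap w C = lam)
    (hlam_min : ∀ C : Finset α, IsSteinerCut S C → lam ≤ cutCap w C)
    (W : Finset α) (hW : IsClass w S lam W)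
    (s : α) (hsS : s ∈ S) (hsW : s ∈ W)
    (x y x' y' : α) (hxW : x ∈ W) (hyW : y ∈ W) (hx'W : x' ∈ W) (hy'W : y' ∈ W)
    (hxy : 1 ≤ w x y) (hx'y' : 1 ≤ w x' y')
    (C1 C2 : Finset α)
    (hC1 : IsPlusOneCut w S lam C1) (hC2 : IsPlusOneCut w S lam C2)
    (hs1 : s ∈ C1) (hx1 : x ∈ C1) (hs2 : s ∈ C2) (hx'2 : x' ∈ C2)
    (hy : y ∉ C1 ∪ C2) (hy' : y' ∉ C1 ∪ C2)
    (t : α) (htS : t ∈ S) (ht : t ∉ C1 ∪ C2) :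
    IsPlusOneCut w S lam (C1 ∪ C2) ∧
      x ∈ C1 ∪ C2 ∧ x' ∈ C1 ∪ C2 ∧ y ∉ C1 ∪ C2 ∧ y' ∉ C1 ∪ C2 := by
  obtain ⟨u0, hu0⟩ := hW
  -- a Steiner cut containing s and missing y cannot have capacity lam
  have key : ∀ C : Finset α, IsSteinerCut S C → s ∈ C → y ∉ C → cutCap w C ≠ lam := by
    intro C hSC hsC hyC hcap
    have hmc : IsSMincut w S lam C := ⟨hSC, hcap⟩
    have hns := (hu0 s).mp hsW C hmc
    have hny := (hu0 y).mp hyW C hmc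
    by_cases h0 : u0 ∈ C
    · exact hny (Or.inl ⟨h0, hyC⟩)
    · exact hns (Or.inr ⟨hsC, h0⟩)
  have hUcut : IsSteinerCut S (C1 ∪ C2) :=
    ⟨⟨s, Finset.mem_inter.mpr ⟨Finset.mem_union_left _ hs1, hsS⟩⟩,
     ⟨t, Finset.mem_sdiff.mpr ⟨htS, ht⟩⟩⟩
  have htI : t ∉ C1 ∩ C2 := fun h => ht (Finset.mem_union_left _ (Finset.mem_inter.mp h).1)
  have hyI : y ∉ C1 ∩ C2 := fun h => hy (Finset.mem_union_left _ (Finset.mem_inter.mp h).1)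
  have hIcut : IsSteinerCut S (C1 ∩ C2) :=
    ⟨⟨s, Finset.mem_inter.mpr ⟨Finset.mem_inter.mpr ⟨hs1, hs2⟩, hsS⟩⟩,
     ⟨t, Finset.mem_sdiff.mpr ⟨htS, htI⟩⟩⟩
  have hUge : lam ≤ cutCap w (C1 ∪ C2) := hlam_min _ hUcut
  have hIge : lam ≤ cutCap w (C1 ∩ C2) := hlam_min _ hIcut
  have hUne : cutCap w (C1 ∪ C2) ≠ lam := key _ hUcut (Finset.mem_union_left _ hs1) hy
  have hIne : cutCap w (C1 ∩ C2) ≠ lam :=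
    key _ hIcut (Finset.mem_inter.mpr ⟨hs1, hs2⟩) hyI
  have hsub := cutCap_submodular w C1 C2
  rw [hC1.2, hC2.2] at hsub
  have hUcap : cutCap w (C1 ∪ C2) = lam + 1 := by omega
  exact ⟨⟨hUcut, hUcap⟩, Finset.mem_union_left _ hx1, Finset.mem_union_right _ hx'2, hy, hy'⟩

end Paper
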